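/- Let D be a nonnegative random variable with continuous CDF F and density f, Q ≥ 0, p > 0. For π_R = p·min(Q,D) - w·Q, the variance satisfies Var(π_R) = p²[∫₀^Q 2(Q - t) F(t) dt - (∫₀^Q F(t) dt)²]. -/

import Mathlib

open MeasureTheory ProbabilityTheory Set

/-! With `Y = Q - min Q D = (Q - D)⁺`, the profit is `(p - w) Q - p Y`, so its variance is
`p² Var Y`. For `d ≥ 0` one has `Q - min Q d = ∫₀^Q 1{d ≤ t} dt` and
`(Q - min Q d)² = ∫₀^Q 2 (Q - t) 1{d ≤ t} dt`; taking expectations and swapping the integrals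
(Fubini) gives `E Y = ∫₀^Q F` and `E Y² = ∫₀^Q 2 (Q - t) F(t) dt`. -/

lemma setIntegral_Ioc_indicator_Ici {a b d : ℝ} (had : a ≤ d) (g : ℝ → ℝ) :
    ∫ t in Ioc a b, (Ici d).indicator g t = ∫ t in min b d..b, g t := by
  have hIoc : Ioc d b = Ioc (min b d) b := by
    rcases le_total d b with h | h
    · rw [min_eq_right h]
    · rw [min_eq_left h, Ioc_self, Ioc_eq_empty (not_lt.mpr h)]
  rw [setIntegral_indicator measurableSet_Ici,
    setIntegral_congr_set ((ae_eq_refl (Ioc a b)).inter Ioi_ae_eq_Ici.symm), Ioc_inter_Ioi,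
    max_eq_right had, intervalIntegral.integral_of_le (min_le_left b d), hIoc]

section Moments

variable {Ω : Type*} [MeasurableSpace Ω] (P : Measure Ω) {D : Ω → ℝ}

lemma integral_setIntegral_indicator_Ici_comm [IsFiniteMeasure P] (hD : Measurable D)
    {s : Set ℝ} {g : ℝ → ℝ} (hg : IntegrableOn g s) :
    ∫ ω, (∫ t in s, (Ici (D ω)).indicator g t) ∂P = ∫ t in s, P.real {ω | D ω ≤ t} * g t := by
  have hmeas : MeasurableSet {q : Ω × ℝ | D q.1 ≤ q.2} :=
    measurableSet_le (hD.comp measurable_fst) measurable_snd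
  rw [integral_integral_swap (f := fun ω t => (Ici (D ω)).indicator g t)
    ((hg.comp_snd P).indicator hmeas)]
  congr 1 with t
  exact integral_indicator_const (g t) (hD measurableSet_Iic)

lemma integral_intervalIntegral_min_eq [IsFiniteMeasure P] (hD : Measurable D)
    {a b : ℝ} (hDa : ∀ ω, a ≤ D ω) {g : ℝ → ℝ} (hg : IntegrableOn g (Ioc a b)) :
    ∫ ω, (∫ t in min b (D ω)..b, g t) ∂P = ∫ t in Ioc a b, P.real {ω | D ω ≤ t} * g t := by
  simp_rw [← setIntegral_Ioc_indicator_Ici (hDa _)]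
  exact integral_setIntegral_indicator_Ici_comm P hD hg

lemma integral_sub_min_eq [IsFiniteMeasure P] (hD : Measurable D) (hDnn : ∀ ω, 0 ≤ D ω)
    {Q : ℝ} (hQ : 0 ≤ Q) :
    ∫ ω, (Q - min Q (D ω)) ∂P = ∫ t in 0..Q, P.real {ω | D ω ≤ t} := calc
  _ = ∫ ω, (∫ _ in min Q (D ω)..Q, (1 : ℝ)) ∂P := by simp
  _ = ∫ t in Ioc 0 Q, P.real {ω | D ω ≤ t} * 1 :=
    integral_intervalIntegral_min_eq P hD hDnn continuous_const.integrableOn_Ioc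
  _ = _ := by simp [intervalIntegral.integral_of_le hQ]

lemma integral_sub_min_sq_eq [IsFiniteMeasure P] (hD : Measurable D) (hDnn : ∀ ω, 0 ≤ D ω)
    {Q : ℝ} (hQ : 0 ≤ Q) :
    ∫ ω, (Q - min Q (D ω)) ^ 2 ∂P = ∫ t in 0..Q, 2 * (Q - t) * P.real {ω | D ω ≤ t} := by
  have hsq (m : ℝ) : (Q - m) ^ 2 = ∫ t in m..Q, 2 * (Q - t) := by
    rw [intervalIntegral.integral_comp_sub_left (fun x => 2 * x),
      intervalIntegral.integral_const_mul, integral_id]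
    ring
  calc
  _ = ∫ ω, (∫ t in min Q (D ω)..Q, 2 * (Q - t)) ∂P := by simp_rw [hsq]
  _ = ∫ t in Ioc 0 Q, P.real {ω | D ω ≤ t} * (2 * (Q - t)) :=
    integral_intervalIntegral_min_eq P hD hDnn (by fun_prop : Continuous _).integrableOn_Ioc
  _ = _ := by simp_rw [intervalIntegral.integral_of_le hQ, mul_comm]

lemma variance_sub_min_eq [IsProbabilityMeasure P] (hD : Measurable D) (hDnn : ∀ ω, 0 ≤ D ω)
    {Q : ℝ} (hQ : 0 ≤ Q) :
    Var[fun ω => Q - min Q (D ω); P]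
      = (∫ t in 0..Q, 2 * (Q - t) * P.real {ω | D ω ≤ t})
        - (∫ t in 0..Q, P.real {ω | D ω ≤ t}) ^ 2 := by
  have hbound : ∀ ω, ‖Q - min Q (D ω)‖ ≤ Q := fun ω => by
    rw [Real.norm_eq_abs, abs_le]
    constructor <;> linarith [min_le_left Q (D ω), le_min hQ (hDnn ω)]
  have hL2 : MemLp (fun ω => Q - min Q (D ω)) 2 P :=
    .of_bound (by fun_prop) Q (.of_forall hbound)
  rw [variance_eq_sub hL2, ← integral_sub_min_eq P hD hDnn hQ,
    ← integral_sub_min_sq_eq P hD hDnn hQ]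
  rfl

end Moments

theorem variance_profit_general {Ω : Type*} [MeasurableSpace Ω]
    (P : Measure Ω) [IsProbabilityMeasure P]
    (D : Ω → ℝ) (hD : Measurable D) (hDnn : ∀ ω, 0 ≤ D ω)
    (F : ℝ → ℝ)
    (hF : ∀ t, F t = (P {ω | D ω ≤ t}).toReal)
    (Q p w : ℝ) (hQ : 0 ≤ Q) :
    ∫ ω, (p * min Q (D ω) - w * Q
        - ∫ ω', (p * min Q (D ω') - w * Q) ∂P) ^ 2 ∂P
      = p ^ 2 * ((∫ t in (0:ℝ)..Q, 2 * (Q - t) * F t)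
          - (∫ t in (0:ℝ)..Q, F t) ^ 2) := by
  obtain rfl : F = fun t => P.real {ω | D ω ≤ t} := funext hF
  have hprofit : (fun ω => p * min Q (D ω) - w * Q)
      = fun ω => (p * Q - w * Q) - p * (Q - min Q (D ω)) := by
    ext ω; ring
  rw [← variance_eq_integral (by fun_prop), hprofit, variance_const_sub (by fun_prop),
    variance_const_mul, variance_sub_min_eq P hD hDnn hQ]

theorem variance_profit {Ω : Type*} [MeasurableSpace Ω]
    (P : Measure Ω) [IsProbabilityMeasure P]
    (D : Ω → ℝ) (hD : Measurable D) (hDnn : ∀ ω, 0 ≤ D ω)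
    (F f : ℝ → ℝ)
    (hF : ∀ t, F t = (P {ω | D ω ≤ t}).toReal)
    (hFc : Continuous F)
    (hf : ∀ t, HasDerivAt F (f t) t) (hfnn : ∀ t, 0 ≤ f t)
    (Q p w : ℝ) (hQ : 0 ≤ Q) (hp : 0 < p) :
    ∫ ω, (p * min Q (D ω) - w * Q
        - ∫ ω', (p * min Q (D ω') - w * Q) ∂P) ^ 2 ∂P
      = p ^ 2 * ((∫ t in (0:ℝ)..Q, 2 * (Q - t) * F t)
          - (∫ t in (0:ℝ)..Q, F t) ^ 2) :=
  variance_profit_general P D hD hDnn F hF Q p w hQ
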